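/- arXiv:2510.14710 — 3 statements merged into one kernel-verified Lean document; each statement's English description precedes it below -/
import Mathlib

section
/- If θ has a triangle 0-conflict in [s,t], then θ is non-nested in [s,t]; that is, there exist indices r₁, r₂ ∈ [s,t] and clusters C ∈ θ(r₁), C' ∈ θ(r₂) such that C \ C', C' \ C, and C ∩ C' are all nonempty. -/
open scoped Classical

/-- A partition of a type `X` into nonempty clusters, represented as a finite
set of finite clusters such that every element lies in exactly one cluster. -/
structure Partn (X : Type*) where
  parts : Finset (Finset X)
  nonempty : ∀ C ∈ parts, C.Nonempty
  existsUnique : ∀ x : X, ∃! C, C ∈ parts ∧ x ∈ C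

namespace Partn

variable {X : Type*}

/-- `x` and `y` lie in a common cluster of `π`. -/
def rel (π : Partn X) (x y : X) : Prop := ∃ C ∈ π.parts, x ∈ C ∧ y ∈ C

/-- Refinement order: every cluster of `π` is contained in a cluster of `π'`. -/
def le (π π' : Partn X) : Prop := ∀ C ∈ π.parts, ∃ C' ∈ π'.parts, C ⊆ C'

end Partn

theorem Partn.rel_and_rel_of_mem {X : Type*} {π : Partn X} {C : Finset X} {x y z : X}
    (hC : C ∈ π.parts) (hx : x ∈ C) (hy : y ∈ C) (hz : z ∈ C) : π.rel x y ∧ π.rel y z :=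
  ⟨⟨C, hC, hx, hy⟩, ⟨C, hC, hy, hz⟩⟩

theorem triangle_zero_conflict_implies_non_nested_general
    {X ι : Type*} [DecidableEq X] [LinearOrder ι]
    (θ : ι → Partn X) (s t : ι) (x y z : X)
    (r₁ r₂ : ι) (hr₁ : r₁ ∈ Set.Icc s t) (hr₂ : r₂ ∈ Set.Icc s t)
    (hxy : (θ r₁).rel x y) (hyz : (θ r₂).rel y z)
    (hno : ¬ ∃ r ∈ Set.Icc s t, (θ r).rel x y ∧ (θ r).rel y z) :
    ∃ q₁ ∈ Set.Icc s t, ∃ q₂ ∈ Set.Icc s t,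
      ∃ C ∈ (θ q₁).parts, ∃ C' ∈ (θ q₂).parts,
        (C \ C').Nonempty ∧ (C' \ C).Nonempty ∧ (C ∩ C').Nonempty := by
  obtain ⟨C, hC, hxC, hyC⟩ := hxy
  obtain ⟨C', hC', hyC', hzC'⟩ := hyz
  have hxC' : x ∉ C' := fun hx => hno ⟨r₂, hr₂, Partn.rel_and_rel_of_mem hC' hx hyC' hzC'⟩
  have hzC : z ∉ C := fun hz => hno ⟨r₁, hr₁, Partn.rel_and_rel_of_mem hC hxC hyC hz⟩
  exact ⟨r₁, hr₁, r₂, hr₂, C, hC, C', hC', ⟨x, Finset.mem_sdiff.2 ⟨hxC, hxC'⟩⟩,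
    ⟨z, Finset.mem_sdiff.2 ⟨hzC', hzC⟩⟩, ⟨y, Finset.mem_inter.2 ⟨hyC, hyC'⟩⟩⟩

/-- a triangle 0-conflict implies θ is non-nested in [s,t]. -/
theorem triangle_zero_conflict_implies_non_nested
    {X ι : Type*} [DecidableEq X] [LinearOrder ι]
    (θ : ι → Partn X) (s t : ι) (x y z : X)
    (hxy' : x ≠ y) (hxz' : x ≠ z) (hyz' : y ≠ z)
    (r₁ r₂ : ι) (hr₁ : r₁ ∈ Set.Icc s t) (hr₂ : r₂ ∈ Set.Icc s t)
    (hxy : (θ r₁).rel x y) (hyz : (θ r₂).rel y z)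
    (hno : ¬ ∃ r ∈ Set.Icc s t, (θ r).rel x y ∧ (θ r).rel y z) :
    ∃ q₁ ∈ Set.Icc s t, ∃ q₂ ∈ Set.Icc s t,
      ∃ C ∈ (θ q₁).parts, ∃ C' ∈ (θ q₂).parts,
        (C \ C').Nonempty ∧ (C' \ C).Nonempty ∧ (C ∩ C').Nonempty :=
  triangle_zero_conflict_implies_non_nested_general θ s t x y z r₁ r₂ hr₁ hr₂ hxy hyz hno
end

section
/- The number of connected components of the union graph G^{s,t} is strictly less than min over r ∈ [s,t] of |θ(r)| if and only if the subposet {θ(r) : r ∈ [s,t]} has no maximum element with respect to the refinement order (i.e., θ has a 0-conflict in [s,t]). -/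
open scoped Classical

/-! The components of the union graph are the classes of the join `S` of the equivalence
relations of the partitions `θ r`, `r ∈ [s, t]`. Each `θ r` refines `S`, so the number of
components is at most `|θ r|`, with equality iff `S` is no coarser than `θ r`, i.e. iff `θ r` is a
maximum. So the number of components lies below every `|θ r|`, equivalently below their
minimum, iff no `θ r` is a maximum. -/

namespace Partn

variable {X : Type*}

lemma eq_of_mem {π : Partn X} {C D : Finset X} {x : X} (hC : C ∈ π.parts) (hD : D ∈ π.parts)
    (hxC : x ∈ C) (hxD : x ∈ D) : C = D := by
  obtain ⟨E, _, hu⟩ := π.existsUnique x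
  exact (hu C ⟨hC, hxC⟩).trans (hu D ⟨hD, hxD⟩).symm

lemma rel_iff_of_mem {π : Partn X} {C : Finset X} {x y : X} (hC : C ∈ π.parts) (hxC : x ∈ C) :
    π.rel x y ↔ y ∈ C :=
  ⟨fun ⟨_, hD, hxD, hyD⟩ => eq_of_mem hD hC hxD hxC ▸ hyD, fun hyC => ⟨C, hC, hxC, hyC⟩⟩

def setoid (π : Partn X) : Setoid X where
  r := π.rel
  iseqv := by
    refine ⟨fun x => ?_, fun ⟨C, hC, hx, hy⟩ => ⟨C, hC, hy, hx⟩, fun ⟨C, hC, hx, hy⟩ hyz => ?_⟩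
    · obtain ⟨C, ⟨hC, hxC⟩, _⟩ := π.existsUnique x
      exact ⟨C, hC, hxC, hxC⟩
    · exact ⟨C, hC, hx, (rel_iff_of_mem hC hy).1 hyz⟩

lemma setoid_apply (π : Partn X) (x y : X) : π.setoid x y ↔ π.rel x y := Iff.rfl

noncomputable def clusterOf (π : Partn X) (x : X) : π.parts :=
  ⟨_, (π.existsUnique x).exists.choose_spec.1⟩

lemma mem_clusterOf (π : Partn X) (x : X) : x ∈ (π.clusterOf x : Finset X) :=
  (π.existsUnique x).exists.choose_spec.2

lemma clusterOf_eq_clusterOf_iff (π : Partn X) {x y : X} :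
    π.clusterOf x = π.clusterOf y ↔ π.rel x y := by
  rw [rel_iff_of_mem (π.clusterOf x).2 (π.mem_clusterOf x), Subtype.ext_iff]
  exact ⟨fun h => h ▸ π.mem_clusterOf y,
    fun hy => eq_of_mem (π.clusterOf x).2 (π.clusterOf y).2 hy (π.mem_clusterOf y)⟩

noncomputable def quotientEquivParts (π : Partn X) : Quotient π.setoid ≃ π.parts :=
  Equiv.ofBijective (Quotient.lift π.clusterOf fun _ _ => π.clusterOf_eq_clusterOf_iff.2)
    ⟨Quotient.ind₂ fun _ _ h => Quotient.sound (π.clusterOf_eq_clusterOf_iff.1 h),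
      fun C => ⟨⟦(π.nonempty C.1 C.2).choose⟧, Subtype.ext <|
        eq_of_mem (π.clusterOf _).2 C.2 (π.mem_clusterOf _) (π.nonempty C.1 C.2).choose_spec⟩⟩

lemma card_quotient_setoid (π : Partn X) : Nat.card (Quotient π.setoid) = π.parts.card := by
  rw [Nat.card_congr π.quotientEquivParts, Nat.card_eq_fintype_card, Fintype.card_coe]

lemma le_iff_setoid_le {π π' : Partn X} : π.le π' ↔ π.setoid ≤ π'.setoid := by
  refine ⟨fun h x y ⟨C, hC, hxC, hyC⟩ => ?_, fun h C hC => ?_⟩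
  · obtain ⟨C', hC', hCC'⟩ := h C hC
    exact ⟨C', hC', hCC' hxC, hCC' hyC⟩
  · obtain ⟨x, hxC⟩ := π.nonempty C hC
    refine ⟨π'.clusterOf x, (π'.clusterOf x).2, fun y hyC => ?_⟩
    exact (rel_iff_of_mem (π'.clusterOf x).2 (π'.mem_clusterOf x)).1 (h ⟨C, hC, hxC, hyC⟩)

end Partn

lemma Setoid.card_quotient_lt_card_quotient_iff {α : Type*} [Finite α] {s t : Setoid α}
    (hst : s ≤ t) : Nat.card (Quotient t) < Nat.card (Quotient s) ↔ ¬ t ≤ s := by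
  have hsurj : Function.Surjective (Setoid.map_of_le hst) := Quotient.ind fun x => ⟨⟦x⟧, rfl⟩
  rw [← not_le, not_congr]
  refine ⟨fun hcard x y hxy => ?_, fun hts => ?_⟩
  · have hinj := (hsurj.bijective_of_nat_card_le hcard).1
    exact Quotient.exact (hinj (Quotient.sound hxy : (⟦x⟧ : Quotient t) = ⟦y⟧))
  · have hinj : Function.Injective (Setoid.map_of_le hst) :=
      Quotient.ind₂ fun x y h => Quotient.sound (hts (Quotient.exact h))
    exact (Nat.card_eq_of_bijective _ ⟨hinj, hsurj⟩).le

lemma Nat.lt_sInf_image_iff {ι : Type*} {f : ι → ℕ} {A : Set ι} (hA : A.Nonempty) {n : ℕ} :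
    n < sInf (f '' A) ↔ ∀ a ∈ A, n < f a := by
  refine ⟨fun h a ha => h.trans_le (Nat.sInf_le ⟨a, ha, rfl⟩), fun h => ?_⟩
  obtain ⟨a, ha, hfa⟩ := Nat.sInf_mem (hA.image f)
  exact hfa ▸ h a ha

lemma Partn.eqvGen_exists_rel_eq_sSup {X ι : Type*} (θ : ι → Partn X) (I : Set ι) :
    Relation.EqvGen.setoid (fun x y => ∃ r ∈ I, (θ r).rel x y) =
      sSup ((fun r => (θ r).setoid) '' I) := by
  rw [Setoid.sSup_eq_eqvGen]
  congr! 3 with x y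
  simp [Partn.setoid_apply]

/-- the number of connected components of the union graph is
strictly below the minimal number of clusters iff there is a 0-conflict. -/
theorem numComponents_lt_min_card_iff_zero_conflict
    {X ι : Type*} [Fintype X] [LinearOrder ι]
    (θ : ι → Partn X) (s t : ι) (hst : s ≤ t) :
    Nat.card (Quotient (Relation.EqvGen.setoid
        (fun x y : X => ∃ r ∈ Set.Icc s t, (θ r).rel x y))) <
      sInf ((fun r => (θ r).parts.card) '' Set.Icc s t) ↔
    ¬ ∃ r ∈ Set.Icc s t, ∀ r' ∈ Set.Icc s t, Partn.le (θ r') (θ r) := by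
  rw [Partn.eqvGen_exists_rel_eq_sSup, Nat.lt_sInf_image_iff (Set.nonempty_Icc.2 hst)]
  push Not
  refine forall₂_congr fun r hr => ?_
  rw [← Partn.card_quotient_setoid,
    Setoid.card_quotient_lt_card_quotient_iff (le_sSup (Set.mem_image_of_mem _ hr)), sSup_le_iff,
    Set.forall_mem_image]
  simp only [Partn.le_iff_setoid_le, not_forall, exists_prop]
end

section
/- Every cycle in the bipartite cluster-overlap graph of two partitions of a finite set has even length, and such a cycle exists if and only if the simplicial complex K^{t_m,t_{m+1}} of the two-scale Multiscale Clustering Bifiltration has nontrivial first homology (a 1-conflict). -/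
open scoped Classical

/-- Bipartite overlap relation between clusters of two partitions. -/
def overlapRel {X : Type*} (π π' : Partn X) :
    (Finset X ⊕ Finset X) → (Finset X ⊕ Finset X) → Prop
  | Sum.inl C, Sum.inr C' =>
      C ∈ π.parts ∧ C' ∈ π'.parts ∧ (C ∩ C').Nonempty
  | _, _ => False

/-- The bipartite cluster-overlap graph of two partitions. -/
def overlapGraph {X : Type*} (π π' : Partn X) :
    SimpleGraph (Finset X ⊕ Finset X) :=
  SimpleGraph.fromRel (overlapRel π π')

/-- The first homology (with rational coefficients) of the two-scale MCbiF
complex K = (⋃_{C ∈ π} ΔC) ∪ (⋃_{C' ∈ π'} ΔC') is trivial: every 1-cycle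
(an antisymmetric function supported on edges of K with vanishing boundary)
is the boundary of a 2-chain supported on triangles of K. -/
def H1Trivial {X : Type*} [Fintype X] (π π' : Partn X) : Prop :=
  ∀ f : X → X → ℚ,
    (∀ x y, f x y = - f y x) →
    (∀ x y, f x y ≠ 0 → ∃ C, (C ∈ π.parts ∨ C ∈ π'.parts) ∧
      x ∈ C ∧ y ∈ C) →
    (∀ x, ∑ y, f x y = 0) →
    ∃ g : X → X → X → ℚ,
      (∀ x y z, g x y z = - g y x z) ∧
      (∀ x y z, g x y z = - g x z y) ∧
      (∀ x y z, g x y z ≠ 0 → ∃ C, (C ∈ π.parts ∨ C ∈ π'.parts) ∧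
        x ∈ C ∧ y ∈ C ∧ z ∈ C) ∧
      (∀ x y, f x y = ∑ z, g x y z)

/-!
The overlap graph is bipartite, clusters of `π` on one side and of `π'` on the other, which gives
the parity statement.

If the graph has a cycle `u, v, …, u`, pick a point in each overlap along it: consecutive points
share a cluster, so they form a closed edge path in `K`, a 1-cycle. Let `ω` be the indicator of
`u ∩ v` and pair the loop with the cochain equal to `δω` on `π`-clusters and to `-δω` on
`π'`-clusters. This cochain is a cocycle on the triangles of `K`, so it pairs to zero with every
boundary. But distinct edges have disjoint overlaps, so the loop meets `u ∩ v` only at its base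
point, which it leaves through one side and re-enters through the other: the pairing is `±4`.

If the graph is a forest, remove a leaf cluster `a` at a time. The part of a 1-cycle `f` touching
points that lie in no other cluster, plus the cone from a point `c` shared with the unique
neighbour of `a` over its boundary, is a cycle in the simplex on `a`, hence the boundary of its
cone from `c`; what is left of `f` lives on the remaining clusters.
-/

open Finset

noncomputable section

section Chains

variable {X : Type*}

def cone₀ (c : X) (d : X → ℚ) : X → X → ℚ :=
  fun x y => (if x = c then d y else 0) - (if y = c then d x else 0)

def cone₁ (c : X) (f : X → X → ℚ) : X → X → X → ℚ :=
  fun x y z => (if x = c then f y z else 0) + (if y = c then f z x else 0) +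
    (if z = c then f x y else 0)

lemma cone₀_antisymm (c : X) (d : X → ℚ) (x y : X) : cone₀ c d x y = -cone₀ c d y x := by
  simp only [cone₀]; ring

lemma cone₀_ne_zero {c : X} {d : X → ℚ} {x y : X} (h : cone₀ c d x y ≠ 0) :
    (x = c ∧ d y ≠ 0) ∨ (y = c ∧ d x ≠ 0) := by
  by_contra! h'
  apply h
  simp only [cone₀]
  split_ifs <;> simp_all

lemma cone₁_ne_zero {c : X} {f : X → X → ℚ} {x y z : X} (h : cone₁ c f x y z ≠ 0) :
    (x = c ∧ f y z ≠ 0) ∨ (y = c ∧ f z x ≠ 0) ∨ (z = c ∧ f x y ≠ 0) := by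
  by_contra! h'
  apply h
  simp only [cone₁]
  split_ifs <;> simp_all

lemma cone₁_swap₁₂ {f : X → X → ℚ} (hf : ∀ x y, f x y = -f y x) (c x y z : X) :
    cone₁ c f x y z = -cone₁ c f y x z := by
  simp only [cone₁, hf x z, hf z y, hf y x]; split_ifs <;> ring

lemma cone₁_swap₂₃ {f : X → X → ℚ} (hf : ∀ x y, f x y = -f y x) (c x y z : X) :
    cone₁ c f x y z = -cone₁ c f x z y := by
  simp only [cone₁, hf x z, hf z y, hf y x]; split_ifs <;> ring

def edgeChain (a b : X) : X → X → ℚ :=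
  fun x y => (if x = a ∧ y = b then 1 else 0) - (if x = b ∧ y = a then 1 else 0)

lemma edgeChain_antisymm (a b x y : X) : edgeChain a b x y = -edgeChain a b y x := by
  simp only [edgeChain, and_comm (a := x = _)]; ring

lemma edgeChain_ne_zero {a b x y : X} (h : edgeChain a b x y ≠ 0) :
    (x = a ∧ y = b) ∨ (x = b ∧ y = a) := by
  by_contra! h'
  apply h
  simp only [edgeChain]
  split_ifs <;> simp_all

def touching (P : X → Prop) (f : X → X → ℚ) : X → X → ℚ :=
  fun x y => if P x ∨ P y then f x y else 0

lemma touching_antisymm {P : X → Prop} {f : X → X → ℚ} (hf : ∀ x y, f x y = -f y x) (x y : X) :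
    touching P f x y = -touching P f y x := by
  simp only [touching, or_comm (a := P x), hf x y]; split_ifs <;> simp

lemma touching_ne_zero {P : X → Prop} {f : X → X → ℚ} {x y : X} (h : touching P f x y ≠ 0) :
    (P x ∨ P y) ∧ f x y ≠ 0 := by
  by_contra! h'
  apply h
  simp only [touching]
  split_ifs <;> simp_all

variable [Fintype X]

def IsBoundaryOn (S : X → X → X → Prop) (f : X → X → ℚ) : Prop :=
  ∃ g : X → X → X → ℚ, (∀ x y z, g x y z = -g y x z) ∧ (∀ x y z, g x y z = -g x z y) ∧
    (∀ x y z, g x y z ≠ 0 → S x y z) ∧ ∀ x y, f x y = ∑ z, g x y z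

lemma IsBoundaryOn.mono {S T : X → X → X → Prop} {f : X → X → ℚ} (hf : IsBoundaryOn S f)
    (hST : ∀ x y z, S x y z → T x y z) : IsBoundaryOn T f := by
  obtain ⟨g, hg₁, hg₂, hgS, hfg⟩ := hf
  exact ⟨g, hg₁, hg₂, fun x y z h => hST x y z (hgS x y z h), hfg⟩

lemma IsBoundaryOn.add {S : X → X → X → Prop} {f f' : X → X → ℚ} (hf : IsBoundaryOn S f)
    (hf' : IsBoundaryOn S f') : IsBoundaryOn S (f + f') := by
  obtain ⟨g, hg₁, hg₂, hgS, hfg⟩ := hf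
  obtain ⟨g', hg₁', hg₂', hgS', hfg'⟩ := hf'
  refine ⟨g + g', fun x y z => ?_, fun x y z => ?_, fun x y z h => ?_, fun x y => ?_⟩
  · simp only [Pi.add_apply, hg₁ x y z, hg₁' x y z]; ring
  · simp only [Pi.add_apply, hg₂ x y z, hg₂' x y z]; ring
  · by_cases hg : g x y z = 0
    · exact hgS' x y z (by simpa [hg] using h)
    · exact hgS x y z hg
  · simp [hfg, hfg', sum_add_distrib]

lemma sum_sum_eq_zero_of_antisymm {F : X → X → ℚ} (hF : ∀ x y, F x y = -F y x) :
    ∑ x, ∑ y, F x y = 0 := by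
  have h : ∑ x, ∑ y, F x y = -∑ x, ∑ y, F x y :=
    calc ∑ x, ∑ y, F x y = ∑ y, ∑ x, F x y := sum_comm
      _ = ∑ y, ∑ x, -F y x := sum_congr rfl fun y _ => sum_congr rfl fun x _ => hF x y
      _ = -∑ y, ∑ x, F y x := by simp only [sum_neg_distrib]
  linarith

lemma sum_rotate (F : X → X → X → ℚ) : ∑ x, ∑ y, ∑ z, F x y z = ∑ x, ∑ y, ∑ z, F y z x := by
  symm; rw [sum_comm]; exact sum_congr rfl fun _ _ => sum_comm

lemma sum_mul_sum_eq_zero_of_cocycle {g : X → X → X → ℚ} {φ : X → X → ℚ}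
    (hg₁ : ∀ x y z, g x y z = -g y x z) (hg₂ : ∀ x y z, g x y z = -g x z y)
    (hφ : ∀ x y z, g x y z ≠ 0 → φ x y + φ y z + φ z x = 0) :
    ∑ x, ∑ y, φ x y * ∑ z, g x y z = 0 := by
  have hrot : ∀ x y z, g y z x = g x y z := fun x y z => by
    rw [hg₁ y z x, hg₂ z y x, hg₁ z x y, hg₂ x z y]; ring
  have hcocycle : ∑ x, ∑ y, ∑ z, (φ x y + φ y z + φ z x) * g x y z = 0 :=
    sum_eq_zero fun x _ => sum_eq_zero fun y _ => sum_eq_zero fun z _ => by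
      by_cases hg : g x y z = 0
      · rw [hg, mul_zero]
      · rw [hφ x y z hg, zero_mul]
  have h₁ : ∑ x, ∑ y, ∑ z, φ x y * g x y z = ∑ x, ∑ y, ∑ z, φ y z * g x y z := by
    rw [sum_rotate fun x y z => φ x y * g x y z]; simp only [hrot]
  have h₂ : ∑ x, ∑ y, ∑ z, φ y z * g x y z = ∑ x, ∑ y, ∑ z, φ z x * g x y z := by
    rw [sum_rotate fun x y z => φ y z * g x y z]; simp only [hrot]
  simp only [add_mul, sum_add_distrib] at hcocycle
  simp only [mul_sum]
  linarith

lemma sum_cone₀ (c : X) (d : X → ℚ) (x : X) :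
    ∑ y, cone₀ c d x y = (if x = c then ∑ y, d y else 0) - d x := by
  simp [cone₀, sum_sub_distrib, sum_ite_eq']

lemma sum_cone₁ {f : X → X → ℚ} (hf : ∀ x y, f x y = -f y x) (c x y : X) :
    ∑ z, cone₁ c f x y z = f x y + cone₀ c (fun x => ∑ y, f x y) x y := by
  simp only [cone₁, cone₀, hf _ x, sum_add_distrib, sum_ite_irrel, sum_const_zero,
    sum_neg_distrib, sum_ite_eq', mem_univ, if_true]
  split_ifs <;> ring

lemma isBoundaryOn_add_cone₀ {A : Set X} {c : X} (hc : c ∈ A) {f : X → X → ℚ}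
    (hf : ∀ x y, f x y = -f y x) (hfA : ∀ x y, f x y ≠ 0 → x ∈ A ∧ y ∈ A) :
    IsBoundaryOn (fun x y z => x ∈ A ∧ y ∈ A ∧ z ∈ A) (f + cone₀ c fun x => ∑ y, f x y) := by
  refine ⟨cone₁ c f, cone₁_swap₁₂ hf c, cone₁_swap₂₃ hf c, fun x y z h => ?_,
    fun x y => (sum_cone₁ hf c x y).symm⟩
  rcases cone₁_ne_zero h with ⟨rfl, hyz⟩ | ⟨rfl, hzx⟩ | ⟨rfl, hxy⟩
  · exact ⟨hc, hfA y z hyz⟩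
  · exact ⟨(hfA z x hzx).2, hc, (hfA z x hzx).1⟩
  · exact ⟨(hfA x y hxy).1, (hfA x y hxy).2, hc⟩

lemma sum_edgeChain (a b x : X) :
    ∑ y, edgeChain a b x y = (if x = a then 1 else 0) - (if x = b then 1 else 0) := by
  simp [edgeChain, sum_sub_distrib, ite_and]

lemma sum_mul_edgeChain (φ : X → X → ℚ) (a b : X) :
    ∑ x, ∑ y, φ x y * edgeChain a b x y = φ a b - φ b a := by
  simp [edgeChain, mul_sub, sum_sub_distrib, ite_and]

end Chains

namespace SimpleGraph

variable {V : Type*} {G : SimpleGraph V}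

lemma IsAcyclic.exists_forall_adj_eq [Finite V] [Nonempty V] (hG : G.IsAcyclic) :
    ∃ u, ∀ v w, G.Adj u v → G.Adj u w → v = w := by
  obtain ⟨u, _, p, hp, hlongest⟩ := Walk.exists_isPath_forall_isPath_length_le_length G
  have hsnd : ∀ v, G.Adj u v → v = p.snd := fun v huv => by
    refine hG.eq_snd_of_adj_start hp huv (by_contra fun hv => ?_)
    have := hlongest _ _ (Walk.cons huv.symm p) (hp.cons hv)
    simp at this
  exact ⟨u, fun v w huv huw => (hsnd v huv).trans (hsnd w huw).symm⟩

lemma IsAcyclic.exists_mem_forall_adj_eq (hG : G.IsAcyclic) {W : Finset V} (hW : W.Nonempty) :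
    ∃ a ∈ W, ∀ i ∈ W, ∀ j ∈ W, G.Adj a i → G.Adj a j → i = j := by
  have : Nonempty W := hW.to_subtype
  obtain ⟨⟨a, ha⟩, hleaf⟩ := (hG.induce (W : Set V)).exists_forall_adj_eq
  exact ⟨a, ha, fun i hi j hj hai haj => congrArg Subtype.val (hleaf ⟨i, hi⟩ ⟨j, hj⟩ hai haj)⟩

namespace Walk

variable {X : Type*} (pt : ∀ ⦃i j⦄, G.Adj i j → X)

def liftChain : ∀ {u v : V}, G.Walk u v → X → X → X → X → ℚ
  | _, _, nil, a, b => edgeChain a b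
  | _, _, cons h q, a, b => edgeChain a (pt h) + q.liftChain (pt h) b

variable {pt}

lemma liftChain_antisymm {u v : V} (q : G.Walk u v) (a b x y : X) :
    q.liftChain pt a b x y = -q.liftChain pt a b y x := by
  induction q generalizing a with
  | nil => exact edgeChain_antisymm a b x y
  | cons h q ih =>
    simp only [liftChain, Pi.add_apply, edgeChain_antisymm a _ x y, ih]; ring

lemma liftChain_ne_zero {U : V → Set X} (hpt : ∀ ⦃i j⦄ (h : G.Adj i j), pt h ∈ U i ∧ pt h ∈ U j)
    {u v : V} (q : G.Walk u v) {a b x y : X} (ha : a ∈ U u) (hb : b ∈ U v)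
    (h : q.liftChain pt a b x y ≠ 0) : ∃ w ∈ q.support, x ∈ U w ∧ y ∈ U w := by
  induction q generalizing a with
  | nil =>
    rcases edgeChain_ne_zero h with ⟨rfl, rfl⟩ | ⟨rfl, rfl⟩ <;> simp_all
  | cons hadj q ih =>
    by_cases he : edgeChain a (pt hadj) x y = 0
    · simp only [liftChain, Pi.add_apply, he, zero_add] at h
      obtain ⟨w, hw, hxy⟩ := ih (hpt hadj).2 hb h
      exact ⟨w, List.mem_cons_of_mem _ hw, hxy⟩
    · refine ⟨_, List.mem_cons_self .., ?_⟩
      rcases edgeChain_ne_zero he with ⟨rfl, rfl⟩ | ⟨rfl, rfl⟩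
      exacts [⟨ha, (hpt hadj).1⟩, ⟨(hpt hadj).1, ha⟩]

variable [Fintype X]

lemma sum_liftChain {u v : V} (q : G.Walk u v) (a b x : X) :
    ∑ y, q.liftChain pt a b x y = (if x = a then 1 else 0) - (if x = b then 1 else 0) := by
  induction q generalizing a with
  | nil => exact sum_edgeChain a b x
  | cons h q ih =>
    simp only [liftChain, Pi.add_apply, sum_add_distrib, sum_edgeChain, ih]; ring

lemma sum_mul_liftChain {U : V → Set X} (hpt : ∀ ⦃i j⦄ (h : G.Adj i j), pt h ∈ U i ∧ pt h ∈ U j)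
    {φ : X → X → ℚ} {ε : V → ℚ} {ω : X → ℚ} {u v : V} (q : G.Walk u v)
    (hφ : ∀ w ∈ q.support, ∀ x ∈ U w, ∀ y ∈ U w, φ x y = ε w * (ω y - ω x))
    (hω : ∀ ⦃i j⦄ (h : G.Adj i j), s(i, j) ∈ q.edges → ω (pt h) = 0)
    {a b : X} (ha : a ∈ U u) (hb : b ∈ U v) :
    ∑ x, ∑ y, φ x y * q.liftChain pt a b x y = 2 * (ε v * ω b - ε u * ω a) := by
  induction q generalizing a with
  | nil =>
    simp only [liftChain, sum_mul_edgeChain]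
    rw [hφ _ (List.mem_singleton_self _) a ha b hb, hφ _ (List.mem_singleton_self _) b hb a ha]
    ring
  | cons h q ih =>
    have hm := hpt h
    simp only [liftChain, Pi.add_apply, mul_add, sum_add_distrib, sum_mul_edgeChain]
    rw [ih (fun w hw => hφ w (List.mem_cons_of_mem _ hw))
      (fun i j h' he => hω h' (List.mem_cons_of_mem _ he)) hm.2 hb,
      hφ _ (List.mem_cons_self ..) a ha _ hm.1, hφ _ (List.mem_cons_self ..) _ hm.1 a ha,
      hω h (List.mem_cons_self ..)]
    ring

end Walk

end SimpleGraph

section Filling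

variable {ι X : Type*} {U : ι → Set X} {W : Finset ι} {a : ι} {f : X → X → ℚ}

def OnlyIn (W : Finset ι) (U : ι → Set X) (a : ι) (x : X) : Prop :=
  ∀ i ∈ W, x ∈ U i → i = a

lemma exists_hub {G : SimpleGraph ι}
    (hW : ∀ i ∈ W, ∀ j ∈ W, i ≠ j → (U i ∩ U j).Nonempty → G.Adj i j)
    (ha : a ∈ W) (hleaf : ∀ i ∈ W, ∀ j ∈ W, G.Adj a i → G.Adj a j → i = j)
    (hne : (U a).Nonempty) :
    ∃ c ∈ U a, ∀ x ∈ U a, ¬OnlyIn W U a x →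
      ∃ b ∈ W.erase a, c ∈ U b ∧ ∀ y ∈ U a, ¬OnlyIn W U a y → y ∈ U b := by
  by_cases hshared : ∃ x ∈ U a, ¬OnlyIn W U a x
  · obtain ⟨c, hc, hcs⟩ := hshared
    simp only [OnlyIn, not_forall, exists_prop] at hcs ⊢
    obtain ⟨b, hb, hcb, hba⟩ := hcs
    have hadj : ∀ i ∈ W, ∀ y ∈ U a, y ∈ U i → i ≠ a → G.Adj a i :=
      fun i hi y hya hyi hia => hW a ha i hi (Ne.symm hia) ⟨y, hya, hyi⟩
    refine ⟨c, hc, fun _ _ _ => ⟨b, mem_erase.2 ⟨hba, hb⟩, hcb, ?_⟩⟩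
    rintro y hya ⟨i, hi, hyi, hia⟩
    rwa [hleaf b hb i hi (hadj b hb c hc hcb hba) (hadj i hi y hya hyi hia)]
  · obtain ⟨c, hc⟩ := hne
    exact ⟨c, hc, fun x hx hxs => absurd ⟨x, hx, hxs⟩ hshared⟩

lemma touching_onlyIn_ne_zero (hfW : ∀ x y, f x y ≠ 0 → ∃ i ∈ W, x ∈ U i ∧ y ∈ U i) {x y : X}
    (h : touching (OnlyIn W U a) f x y ≠ 0) : x ∈ U a ∧ y ∈ U a := by
  obtain ⟨hxy, h⟩ := touching_ne_zero h
  obtain ⟨i, hi, hxi, hyi⟩ := hfW x y h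
  obtain rfl : i = a := hxy.elim (· i hi hxi) (· i hi hyi)
  exact ⟨hxi, hyi⟩

variable [Fintype X]

def leafPart (W : Finset ι) (U : ι → Set X) (a : ι) (c : X) (f : X → X → ℚ) : X → X → ℚ :=
  touching (OnlyIn W U a) f + cone₀ c fun x => ∑ y, touching (OnlyIn W U a) f x y

lemma leafPart_antisymm (hf : ∀ x y, f x y = -f y x) (c x y : X) :
    leafPart W U a c f x y = -leafPart W U a c f y x := by
  simp only [leafPart, Pi.add_apply, touching_antisymm hf x y, cone₀_antisymm c _ x y]; ring

lemma sum_leafPart (hf : ∀ x y, f x y = -f y x) (c x : X) : ∑ y, leafPart W U a c f x y = 0 := by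
  simp only [leafPart, Pi.add_apply, sum_add_distrib, sum_cone₀,
    sum_sum_eq_zero_of_antisymm (touching_antisymm hf)]
  simp

lemma isBoundaryOn_leafPart (hf : ∀ x y, f x y = -f y x)
    (hfW : ∀ x y, f x y ≠ 0 → ∃ i ∈ W, x ∈ U i ∧ y ∈ U i) {c : X} (hc : c ∈ U a) :
    IsBoundaryOn (fun x y z => x ∈ U a ∧ y ∈ U a ∧ z ∈ U a) (leafPart W U a c f) :=
  isBoundaryOn_add_cone₀ hc (touching_antisymm hf) fun _ _ => touching_onlyIn_ne_zero hfW

lemma sum_touching_onlyIn_ne_zero (hfW : ∀ x y, f x y ≠ 0 → ∃ i ∈ W, x ∈ U i ∧ y ∈ U i)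
    (hcyc : ∀ x, ∑ y, f x y = 0) {x : X} (h : ∑ y, touching (OnlyIn W U a) f x y ≠ 0) :
    x ∈ U a ∧ ¬OnlyIn W U a x := by
  refine ⟨?_, fun hx => h ?_⟩
  · obtain ⟨y, -, hy⟩ := exists_ne_zero_of_sum_ne_zero h
    exact (touching_onlyIn_ne_zero hfW hy).1
  · simp only [touching, hx, true_or, if_true, hcyc]

lemma exists_mem_erase_of_sub_leafPart_ne_zero
    (hfW : ∀ x y, f x y ≠ 0 → ∃ i ∈ W, x ∈ U i ∧ y ∈ U i) (hcyc : ∀ x, ∑ y, f x y = 0) {c : X}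
    (hhub : ∀ x ∈ U a, ¬OnlyIn W U a x →
      ∃ b ∈ W.erase a, c ∈ U b ∧ ∀ y ∈ U a, ¬OnlyIn W U a y → y ∈ U b)
    {x y : X} (h : f x y - leafPart W U a c f x y ≠ 0) : ∃ i ∈ W.erase a, x ∈ U i ∧ y ∈ U i := by
  simp only [leafPart, Pi.add_apply] at h
  by_cases hcone : cone₀ c (fun x => ∑ y, touching (OnlyIn W U a) f x y) x y = 0
  · have hff : f x y - touching (OnlyIn W U a) f x y ≠ 0 := by simpa [hcone] using h
    have hP : ¬OnlyIn W U a x ∧ ¬OnlyIn W U a y :=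
      not_or.1 fun hP => hff (by simp [touching, hP])
    obtain ⟨i, hi, hxi, hyi⟩ := hfW x y fun h0 => hff (by simp [touching, h0])
    rcases eq_or_ne i a with rfl | hia
    · obtain ⟨b, hb, -, hbU⟩ := hhub x hxi hP.1
      exact ⟨b, hb, hbU x hxi hP.1, hbU y hyi hP.2⟩
    · exact ⟨i, mem_erase.2 ⟨hia, hi⟩, hxi, hyi⟩
  · rcases cone₀_ne_zero hcone with ⟨rfl, hdy⟩ | ⟨rfl, hdx⟩
    · obtain ⟨hya, hys⟩ := sum_touching_onlyIn_ne_zero hfW hcyc hdy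
      obtain ⟨b, hb, hcb, hbU⟩ := hhub y hya hys
      exact ⟨b, hb, hcb, hbU y hya hys⟩
    · obtain ⟨hxa, hxs⟩ := sum_touching_onlyIn_ne_zero hfW hcyc hdx
      obtain ⟨b, hb, hcb, hbU⟩ := hhub x hxa hxs
      exact ⟨b, hb, hbU x hxa hxs, hcb⟩

theorem isBoundaryOn_of_isAcyclic {G : SimpleGraph ι} (hG : G.IsAcyclic)
    (hW : ∀ i ∈ W, ∀ j ∈ W, i ≠ j → (U i ∩ U j).Nonempty → G.Adj i j)
    (hne : ∀ i ∈ W, (U i).Nonempty) (hf : ∀ x y, f x y = -f y x)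
    (hfW : ∀ x y, f x y ≠ 0 → ∃ i ∈ W, x ∈ U i ∧ y ∈ U i) (hcyc : ∀ x, ∑ y, f x y = 0) :
    IsBoundaryOn (fun x y z => ∃ i ∈ W, x ∈ U i ∧ y ∈ U i ∧ z ∈ U i) f := by
  induction W using Finset.strongInduction generalizing f with | H W ih => ?_
  rcases W.eq_empty_or_nonempty with rfl | hWne
  · refine ⟨0, by simp, by simp, by simp, fun x y => by_contra fun h => ?_⟩
    simpa using hfW x y (by simpa using h)
  obtain ⟨a, ha, hleaf⟩ := hG.exists_mem_forall_adj_eq hWne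
  obtain ⟨c, hc, hhub⟩ := exists_hub hW ha hleaf (hne a ha)
  have hrest : IsBoundaryOn (fun x y z => ∃ i ∈ W.erase a, x ∈ U i ∧ y ∈ U i ∧ z ∈ U i)
      (f - leafPart W U a c f) := by
    refine ih _ (erase_ssubset ha)
      (fun i hi j hj => hW i (mem_of_mem_erase hi) j (mem_of_mem_erase hj))
      (fun i hi => hne i (mem_of_mem_erase hi)) (fun x y => ?_)
      (fun x y => exists_mem_erase_of_sub_leafPart_ne_zero hfW hcyc hhub) (fun x => ?_)
    · simp only [Pi.sub_apply, hf x y, leafPart_antisymm hf c x y]; ring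
    · simp [sum_sub_distrib, sum_leafPart hf, hcyc]
  simpa using (hrest.mono fun x y z ⟨i, hi, h⟩ => ⟨i, mem_of_mem_erase hi, h⟩).add
    ((isBoundaryOn_leafPart hf hfW hc).mono fun x y z h => ⟨a, ha, h⟩)

end Filling

namespace Partn

variable {X : Type*} {π : Partn X}

lemma eq_of_mem_of_mem {C D : Finset X} {x : X} (hC : C ∈ π.parts) (hD : D ∈ π.parts)
    (hxC : x ∈ C) (hxD : x ∈ D) : C = D :=
  (π.existsUnique x).unique ⟨hC, hxC⟩ ⟨hD, hxD⟩

lemma mem_iff_of_rel {x y : X} (h : π.rel x y) {C : Finset X} (hC : C ∈ π.parts) :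
    x ∈ C ↔ y ∈ C := by
  obtain ⟨D, hD, hxD, hyD⟩ := h
  exact ⟨fun hxC => eq_of_mem_of_mem hD hC hxD hxC ▸ hyD,
    fun hyC => eq_of_mem_of_mem hD hC hyD hyC ▸ hxD⟩

end Partn

section Overlap

variable {X : Type*} {π π' : Partn X}

def cluster : Finset X ⊕ Finset X → Set X :=
  Sum.elim (fun C => C) (fun C => C)

def clusters (π π' : Partn X) : Finset (Finset X ⊕ Finset X) :=
  π.parts.disjSum π'.parts

lemma exists_mem_clusters_iff {P : Set X → Prop} :
    (∃ i ∈ clusters π π', P (cluster i)) ↔ ∃ C, (C ∈ π.parts ∨ C ∈ π'.parts) ∧ P C := by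
  simp [clusters, cluster, or_and_right, exists_or]

lemma overlapGraph_adj {i j : Finset X ⊕ Finset X} :
    (overlapGraph π π').Adj i j ↔ i ∈ clusters π π' ∧ j ∈ clusters π π' ∧
      i.isLeft ≠ j.isLeft ∧ (cluster i ∩ cluster j).Nonempty := by
  rcases i with C | C <;> rcases j with D | D <;>
    simp [overlapGraph, overlapRel, clusters, cluster, ← coe_inter, inter_comm D C, and_left_comm]

def overlapColoring (π π' : Partn X) : (overlapGraph π π').Coloring Bool :=
  SimpleGraph.Coloring.mk Sum.isLeft fun h => (overlapGraph_adj.1 h).2.2.1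

lemma eq_of_isLeft_eq {i k : Finset X ⊕ Finset X} (hi : i ∈ clusters π π') (hk : k ∈ clusters π π')
    (hik : i.isLeft = k.isLeft) {x : X} (hxi : x ∈ cluster i) (hxk : x ∈ cluster k) : i = k := by
  rcases i with C | C <;> rcases k with D | D <;>
    simp_all only [clusters, inl_mem_disjSum, inr_mem_disjSum, Sum.isLeft_inl, Sum.isLeft_inr,
      Bool.true_eq_false, Bool.false_eq_true, Sum.inl.injEq, Sum.inr.injEq]
  exacts [π.eq_of_mem_of_mem hi hk hxi hxk, π'.eq_of_mem_of_mem hi hk hxi hxk]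

lemma overlapGraph_edge_eq {i j u v : Finset X ⊕ Finset X} (hij : (overlapGraph π π').Adj i j)
    (huv : (overlapGraph π π').Adj u v) {x : X} (hxi : x ∈ cluster i) (hxj : x ∈ cluster j)
    (hxu : x ∈ cluster u) (hxv : x ∈ cluster v) : s(i, j) = s(u, v) := by
  obtain ⟨hi, hj, hij, -⟩ := overlapGraph_adj.1 hij
  obtain ⟨hu, hv, huv, -⟩ := overlapGraph_adj.1 huv
  have hsides : ∀ a b c d : Bool, a ≠ b → c ≠ d → (a = c → b = d) ∧ (a ≠ c → a = d ∧ b = c) := by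
    decide
  by_cases hiu : i.isLeft = u.isLeft
  · rw [eq_of_isLeft_eq hi hu hiu hxi hxu,
      eq_of_isLeft_eq hj hv ((hsides _ _ _ _ hij huv).1 hiu) hxj hxv]
  · obtain ⟨hiv, hju⟩ := (hsides _ _ _ _ hij huv).2 hiu
    rw [eq_of_isLeft_eq hi hv hiv hxi hxv, eq_of_isLeft_eq hj hu hju hxj hxu, Sym2.eq_swap]

lemma mem_clusters_of_mem_support {u v : Finset X ⊕ Finset X} (q : (overlapGraph π π').Walk u v)
    (hu : u ∈ clusters π π') {w : Finset X ⊕ Finset X} (hw : w ∈ q.support) :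
    w ∈ clusters π π' := by
  induction q with
  | nil => simp_all
  | cons h q ih =>
    rcases List.mem_cons.1 hw with rfl | hw
    exacts [hu, ih (overlapGraph_adj.1 h).2.1 hw]

lemma mem_cluster_iff_of_rel {x y : X} (h : π.rel x y) (h' : π'.rel x y)
    {w : Finset X ⊕ Finset X} (hw : w ∈ clusters π π') : x ∈ cluster w ↔ y ∈ cluster w := by
  rcases w with C | C <;> simp only [clusters, inl_mem_disjSum, inr_mem_disjSum] at hw
  exacts [Partn.mem_iff_of_rel h hw, Partn.mem_iff_of_rel h' hw]

def overlapCocycle (π : Partn X) (ω : X → ℚ) (x y : X) : ℚ :=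
  if π.rel x y then ω y - ω x else ω x - ω y

variable {ω : X → ℚ}

lemma overlapCocycle_of_rel' (hω : ∀ x y, π.rel x y → π'.rel x y → ω x = ω y) {x y : X}
    (h' : π'.rel x y) : overlapCocycle π ω x y = ω x - ω y := by
  unfold overlapCocycle
  split_ifs with h
  · rw [hω x y h h']
  · rfl

lemma overlapCocycle_add_add_eq_zero (hω : ∀ x y, π.rel x y → π'.rel x y → ω x = ω y)
    {x y z : X} (h : ∃ C, (C ∈ π.parts ∨ C ∈ π'.parts) ∧ x ∈ C ∧ y ∈ C ∧ z ∈ C) :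
    overlapCocycle π ω x y + overlapCocycle π ω y z + overlapCocycle π ω z x = 0 := by
  obtain ⟨C, hC | hC, hx, hy, hz⟩ := h
  · have hxy : π.rel x y := ⟨C, hC, hx, hy⟩
    have hyz : π.rel y z := ⟨C, hC, hy, hz⟩
    have hzx : π.rel z x := ⟨C, hC, hz, hx⟩
    simp only [overlapCocycle, hxy, hyz, hzx, if_true]; ring
  · rw [overlapCocycle_of_rel' hω ⟨C, hC, hx, hy⟩, overlapCocycle_of_rel' hω ⟨C, hC, hy, hz⟩,
      overlapCocycle_of_rel' hω ⟨C, hC, hz, hx⟩]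
    ring

lemma overlapCocycle_of_mem_cluster (hω : ∀ x y, π.rel x y → π'.rel x y → ω x = ω y)
    {w : Finset X ⊕ Finset X} (hw : w ∈ clusters π π') {x y : X} (hx : x ∈ cluster w)
    (hy : y ∈ cluster w) :
    overlapCocycle π ω x y = (if w.isLeft then 1 else -1) * (ω y - ω x) := by
  rcases w with C | C <;> simp only [clusters, inl_mem_disjSum, inr_mem_disjSum] at hw
  · simp [overlapCocycle, show π.rel x y from ⟨C, hw, hx, hy⟩]
  · simp [overlapCocycle_of_rel' hω ⟨C, hw, hx, hy⟩]

variable [Fintype X]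

theorem not_h1Trivial_of_isCycle {u : Finset X ⊕ Finset X} {p : (overlapGraph π π').Walk u u}
    (hp : p.IsCycle) : ¬H1Trivial π π' := by
  cases p with
  | nil => exact absurd hp SimpleGraph.Walk.not_isCycle_nil
  | @cons _ v _ h q =>
  obtain ⟨-, huvq⟩ := (SimpleGraph.Walk.cons_isCycle_iff q h).1 hp
  choose pt hpt using fun ⦃i j⦄ (h : (overlapGraph π π').Adj i j) => (overlapGraph_adj.1 h).2.2.2
  obtain ⟨hu, hv, hsides, -⟩ := overlapGraph_adj.1 h
  set ω : X → ℚ := fun x => if x ∈ cluster u ∧ x ∈ cluster v then 1 else 0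
  have hω : ∀ x y, π.rel x y → π'.rel x y → ω x = ω y := fun x y h h' => by
    simp only [ω, mem_cluster_iff_of_rel h h' hu, mem_cluster_iff_of_rel h h' hv]
  have hsupp := fun w (hw : w ∈ q.support) => mem_clusters_of_mem_support q hv hw
  set loop := q.liftChain pt (pt h) (pt h)
  have hloop_supp : ∀ x y, loop x y ≠ 0 →
      ∃ C, (C ∈ π.parts ∨ C ∈ π'.parts) ∧ x ∈ C ∧ y ∈ C := fun x y hxy => by
    obtain ⟨w, hw, hxw, hyw⟩ := q.liftChain_ne_zero hpt (hpt h).2 (hpt h).1 hxy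
    exact exists_mem_clusters_iff (P := fun S => x ∈ S ∧ y ∈ S) |>.1 ⟨w, hsupp w hw, hxw, hyw⟩
  have hω_edges : ∀ ⦃i j⦄ (hij : (overlapGraph π π').Adj i j), s(i, j) ∈ q.edges →
      ω (pt hij) = 0 := fun i j hij he => if_neg fun ⟨hmu, hmv⟩ => huvq <|
    overlapGraph_edge_eq hij h (hpt hij).1 (hpt hij).2 hmu hmv ▸ he
  have hpair := q.sum_mul_liftChain hpt (φ := overlapCocycle π ω)
    (ε := fun w => if w.isLeft then 1 else -1) (fun w hw x hx y hy =>
      overlapCocycle_of_mem_cluster hω (hsupp w hw) hx hy) hω_edges (hpt h).2 (hpt h).1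
  intro hH1
  obtain ⟨g, hg₁, hg₂, hgK, hloop⟩ := hH1 loop (q.liftChain_antisymm (pt h) (pt h)) hloop_supp
    fun x => by simp [loop, SimpleGraph.Walk.sum_liftChain]
  have h0 := sum_mul_sum_eq_zero_of_cocycle (φ := overlapCocycle π ω) hg₁ hg₂
    fun x y z hg => overlapCocycle_add_add_eq_zero hω (hgK x y z hg)
  simp only [← hloop] at h0
  rw [hpair, show ω (pt h) = 1 from if_pos (hpt h)] at h0
  revert h0 hsides
  cases u.isLeft <;> cases v.isLeft <;> norm_num

theorem h1Trivial_of_isAcyclic (hG : (overlapGraph π π').IsAcyclic) : H1Trivial π π' := by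
  intro f hf hfK hcyc
  have hW : ∀ i ∈ clusters π π', ∀ j ∈ clusters π π', i ≠ j →
      (cluster i ∩ cluster j).Nonempty → (overlapGraph π π').Adj i j :=
    fun i hi j hj hij ⟨x, hxi, hxj⟩ =>
      overlapGraph_adj.2 ⟨hi, hj, fun hs => hij (eq_of_isLeft_eq hi hj hs hxi hxj), x, hxi, hxj⟩
  have hne : ∀ i ∈ clusters π π', (cluster i).Nonempty := by
    rintro (C | C) hC <;> simp only [clusters, inl_mem_disjSum, inr_mem_disjSum] at hC
    exacts [coe_nonempty.2 (π.nonempty C hC), coe_nonempty.2 (π'.nonempty C hC)]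
  refine (isBoundaryOn_of_isAcyclic hG hW hne hf (fun x y hxy => ?_) hcyc).mono
    fun x y z h => exists_mem_clusters_iff (P := fun S => x ∈ S ∧ y ∈ S ∧ z ∈ S) |>.1 h
  exact exists_mem_clusters_iff (P := fun S => x ∈ S ∧ y ∈ S) |>.2 (hfK x y hxy)

end Overlap

end

theorem overlap_cycles_even_and_cycle_iff_H1_nontrivial_general
    {X : Type*} [Fintype X] (π π' : Partn X) :
    (∀ (u : Finset X ⊕ Finset X) (p : (overlapGraph π π').Walk u u),
      p.IsCycle → Even p.length) ∧
    ((∃ (u : Finset X ⊕ Finset X) (p : (overlapGraph π π').Walk u u),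
        p.IsCycle) ↔ ¬ H1Trivial π π') :=
  ⟨fun _ p _ => (overlapColoring π π').even_length_iff_congr p |>.2 Iff.rfl,
    fun ⟨_, _, hp⟩ => not_h1Trivial_of_isCycle hp,
    fun h => by_contra fun hno => h (h1Trivial_of_isAcyclic fun _ p hp => hno ⟨_, p, hp⟩)⟩

/-- every cycle in the bipartite cluster-overlap graph of two
partitions has even length, and such a cycle exists iff the two-scale MCbiF
complex has nontrivial first homology (a 1-conflict). -/
theorem overlap_cycles_even_and_cycle_iff_H1_nontrivial
    {X : Type*} [DecidableEq X] [Fintype X] (π π' : Partn X) :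
    (∀ (u : Finset X ⊕ Finset X) (p : (overlapGraph π π').Walk u u),
      p.IsCycle → Even p.length) ∧
    ((∃ (u : Finset X ⊕ Finset X) (p : (overlapGraph π π').Walk u u),
        p.IsCycle) ↔ ¬ H1Trivial π π') :=
  overlap_cycles_even_and_cycle_iff_H1_nontrivial_general π π'
end
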